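/- arXiv:1405.2713 — 7 statements merged into one kernel-verified Lean document; each statement's English description precedes it below -/
import Mathlib

section
/- Let r be a positive integer and let k, l be integers with k + l odd. Suppose P : Matrix (Fin r) (Fin r) ℝ → ℝ is a polynomial function such that P(g * A * gᵀ) = |det g|^k · (sign (det g))^l · P(A) for every invertible g ∈ Matrix (Fin r) (Fin r) ℝ and every A ∈ Matrix (Fin r) (Fin r) ℝ (here |det g|^k means the k-th integer power of the positive real |det g|). Then P is identically zero. -/
open Matrix

/-- A function on `r × r` real matrices is a polynomial function if it is the evaluation
of a real multivariate polynomial in the matrix entries. -/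
def IsPolynomialFun {r : ℕ} (P : Matrix (Fin r) (Fin r) ℝ → ℝ) : Prop :=
  ∃ q : MvPolynomial (Fin r × Fin r) ℝ,
    ∀ A : Matrix (Fin r) (Fin r) ℝ, P A = MvPolynomial.eval (fun p => A p.1 p.2) q

theorem no_nonzero_equivariant_poly_of_odd_parity
    (r : ℕ) (hr : 0 < r) (k l : ℤ) (hkl : Odd (k + l))
    (P : Matrix (Fin r) (Fin r) ℝ → ℝ) (hP : IsPolynomialFun P)
    (hequiv : ∀ (g A : Matrix (Fin r) (Fin r) ℝ), IsUnit g.det →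
      P (g * A * gᵀ) = |g.det| ^ k * (Real.sign g.det) ^ l * P A) :
    ∀ A : Matrix (Fin r) (Fin r) ℝ, P A = 0 := by
  haveI : NeZero r := ⟨hr.ne'⟩
  intro A
  by_contra hc
  obtain ⟨q, hq⟩ := hP
  set c := P A with hcdef
  -- the family of diagonal matrices
  set d : ℝ → Fin r → ℝ := fun s i => if i = 0 then s else 1 with hd
  set g : ℝ → Matrix (Fin r) (Fin r) ℝ := fun s => Matrix.diagonal (d s) with hg
  have hdet : ∀ s : ℝ, (g s).det = s := by
    intro s
    rw [hg]
    simp only [Matrix.det_diagonal, hd]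
    rw [Finset.prod_eq_single (0 : Fin r)]
    · simp
    · intro b _ hb; simp [hb]
    · simp
  have hentry : ∀ s : ℝ, ∀ i j : Fin r,
      (g s * A * (g s)ᵀ) i j = d s i * A i j * d s j := by
    intro s i j
    rw [hg, Matrix.diagonal_transpose, Matrix.mul_diagonal, Matrix.diagonal_mul]
  -- one-variable polynomial
  set φ : Fin r × Fin r → Polynomial ℝ := fun p =>
    (if p.1 = 0 then Polynomial.X else 1) * Polynomial.C (A p.1 p.2) *
      (if p.2 = 0 then Polynomial.X else 1) with hφ
  set F : Polynomial ℝ := MvPolynomial.aeval φ q with hF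
  have hFeval : ∀ s : ℝ, F.eval s = P (g s * A * (g s)ᵀ) := by
    intro s
    have h1 : F.eval s = Polynomial.aeval s F := by simp
    rw [h1, hF, MvPolynomial.comp_aeval_apply φ (Polynomial.aeval s) q, hq]
    have : (fun i : Fin r × Fin r => (Polynomial.aeval s) (φ i))
        = fun p : Fin r × Fin r => (g s * A * (g s)ᵀ) p.1 p.2 := by
      funext p
      rw [hentry s p.1 p.2, hφ]
      simp only [_root_.map_mul, Polynomial.aeval_C, apply_ite (Polynomial.aeval s),
        Polynomial.aeval_X, _root_.map_one, hd, Algebra.algebraMap_self, RingHom.id_apply]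
    rw [this, ← MvPolynomial.coe_aeval_eq_eval]
    rfl
  have key : ∀ s : ℝ, s ≠ 0 → F.eval s = |s| ^ k * (Real.sign s) ^ l * c := by
    intro s hs
    rw [hFeval s, hequiv (g s) A (by rw [hdet]; exact isUnit_iff_ne_zero.mpr hs), hdet]
  set m : ℕ := (-k).toNat with hm
  set n : ℕ := k.toNat with hn
  have hmn : (n : ℤ) - (m : ℤ) = k := by omega
  -- polynomial identity
  have hpoly : F * Polynomial.X ^ m = Polynomial.C c * Polynomial.X ^ n := by
    have : ∀ s ∈ Set.Ioi (0 : ℝ),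
        (F * Polynomial.X ^ m - Polynomial.C c * Polynomial.X ^ n).IsRoot s := by
      intro s hs
      have hs0 : (0 : ℝ) < s := hs
      have h1 : F.eval s = s ^ k * c := by
        rw [key s hs0.ne', abs_of_pos hs0, Real.sign_of_pos hs0, _root_.one_zpow, mul_one]
      simp only [Polynomial.IsRoot, Polynomial.eval_sub, Polynomial.eval_mul,
        Polynomial.eval_pow, Polynomial.eval_X, Polynomial.eval_C, h1, sub_eq_zero]
      rw [mul_comm (s ^ k) c, mul_assoc, ← zpow_natCast s m, ← zpow_natCast s n,
        ← zpow_add₀ hs0.ne']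
      have hkmn : k + (m : ℤ) = (n : ℤ) := by omega
      rw [hkmn]
    have h0 := Polynomial.eq_zero_of_infinite_isRoot _
      ((Set.Ioi_infinite (0 : ℝ)).mono this)
    exact sub_eq_zero.mp h0
  -- evaluate at -1
  have hev : F.eval (-1) = (-1 : ℝ) ^ l * c := by
    rw [key (-1) (by norm_num)]
    norm_num [Real.sign_of_neg]
  have heval : ((-1 : ℝ) ^ l * c) * (-1 : ℝ) ^ m = c * (-1 : ℝ) ^ n := by
    have := congrArg (Polynomial.eval (-1 : ℝ)) hpoly
    simpa [hev] using this
  have hml : ((-1 : ℝ) ^ l) * ((-1 : ℝ) ^ (m : ℤ)) = (-1 : ℝ) ^ (n : ℤ) := by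
    rw [zpow_natCast, zpow_natCast]
    apply mul_left_cancel₀ hc
    linear_combination heval
  have hne : (-1 : ℝ) ≠ 0 := by norm_num
  have h3 : ((-1 : ℝ)) ^ (l + (m : ℤ)) = (-1 : ℝ) ^ (n : ℤ) := by
    rw [zpow_add₀ hne]; exact hml
  have h4 : ((-1 : ℝ)) ^ (l - k) = 1 := by
    have he : l - k = (l + (m : ℤ)) - (n : ℤ) := by omega
    rw [he, zpow_sub₀ hne, h3, div_self (zpow_ne_zero _ hne)]
  have h5 : Odd (l - k) := by
    obtain ⟨t, ht⟩ := hkl; exact ⟨t - k, by omega⟩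
  rw [h5.neg_one_zpow] at h4
  norm_num at h4
end

section
/- Let r be an odd positive integer and let k be a nonzero integer. Suppose P : Matrix (Fin r) (Fin r) ℝ → ℝ is a polynomial function such that P(g * A * gᵀ) = (det g)^k · P(A) for every invertible g ∈ Matrix (Fin r) (Fin r) ℝ and every antisymmetric A ∈ Matrix (Fin r) (Fin r) ℝ. Then P(A) = 0 for every antisymmetric A ∈ Matrix (Fin r) (Fin r) ℝ. -/
open Matrix

theorem no_nonzero_equivariant_poly_on_antisymmetric_of_odd_size
    (r : ℕ) (hr : 0 < r) (hodd : Odd r) (k : ℤ) (hk : k ≠ 0)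
    (P : Matrix (Fin r) (Fin r) ℝ → ℝ) (hP : IsPolynomialFun P)
    (hequiv : ∀ (g A : Matrix (Fin r) (Fin r) ℝ), IsUnit g.det → Aᵀ = -A →
      P (g * A * gᵀ) = g.det ^ k * P A) :
    ∀ A : Matrix (Fin r) (Fin r) ℝ, Aᵀ = -A → P A = 0 := by
  intro A hA
  -- A has determinant zero since r is odd
  have hdet : A.det = 0 := by
    have h1 : A.det = -A.det := by
      calc A.det = Aᵀ.det := (Matrix.det_transpose A).symm
        _ = (-A).det := by rw [hA]
        _ = (-1) ^ r * A.det := by rw [Matrix.det_neg]; simp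
        _ = -A.det := by rw [hodd.neg_one_pow]; ring
    linarith
  -- get a kernel vector
  obtain ⟨v, hv0, hAv⟩ := (Matrix.exists_mulVec_eq_zero_iff).mpr hdet
  have hvv : v ⬝ᵥ v ≠ 0 := fun h => hv0 (dotProduct_self_eq_zero.mp h)
  set u : Fin r → ℝ := (v ⬝ᵥ v)⁻¹ • v with hu
  set g : Matrix (Fin r) (Fin r) ℝ := 1 + replicateCol Unit v * replicateRow Unit u with hg
  have hdetg : g.det = 2 := by
    rw [hg, det_one_add_replicateCol_mul_replicateRow]
    rw [hu, smul_dotProduct, smul_eq_mul, inv_mul_cancel₀ hvv]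
    norm_num
  -- u is also in the kernel, and in the left kernel
  have hAu : A *ᵥ u = 0 := by rw [hu, mulVec_smul, hAv, smul_zero]
  have hvA : u ᵥ* A = 0 := by
    have : Aᵀ *ᵥ u = 0 := by rw [hA, neg_mulVec, hAu, neg_zero]
    rwa [← vecMul_transpose] at this
  -- g fixes A under congruence
  have hfix : g * A * gᵀ = A := by
    have h1 : g * A = A := by
      rw [hg, add_mul, one_mul, Matrix.mul_assoc, ← replicateRow_vecMul, hvA]
      ext i j
      simp [Matrix.mul_apply, Matrix.replicateRow_apply]
    have h2 : A * gᵀ = A := by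
      rw [hg, transpose_add, transpose_one, transpose_mul, transpose_replicateRow, transpose_replicateCol]
      rw [Matrix.mul_add, Matrix.mul_one, ← Matrix.mul_assoc, ← replicateCol_mulVec, hAu]
      ext i j
      simp [Matrix.mul_apply, Matrix.replicateCol_apply]
    rw [h1, h2]
  have key := hequiv g A (by rw [hdetg]; exact isUnit_iff_ne_zero.mpr two_ne_zero) hA
  rw [hfix, hdetg] at key
  -- P A = 2^k * P A with 2^k ≠ 1
  have h2k : (2 : ℝ) ^ k ≠ 1 := by
    intro h
    rcases hk.lt_or_gt with hneg | hpos
    · have : (2 : ℝ) ^ k < 1 := zpow_lt_one_of_neg₀ (by norm_num) hneg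
      linarith
    · have : (1 : ℝ) < 2 ^ k := one_lt_zpow₀ (by norm_num) hpos
      linarith
  have : (1 - (2 : ℝ) ^ k) * P A = 0 := by linarith [key]
  rcases mul_eq_zero.mp this with h | h
  · exact absurd (by linarith : (2:ℝ)^k = 1) h2k
  · exact h
end

section
/- Let k, t be natural numbers, n = k + 2t, and let x = fromBlocks 0 0 0 ω_{2t} ∈ Matrix (Fin n) (Fin n) ℝ (zero k × k block in the upper left, ω_{2t} in the lower right). For every invertible g ∈ Matrix (Fin n) (Fin n) ℝ, one has g * x * gᵀ = x if and only if the upper-right k × 2t block of g is zero and the lower-right 2t × 2t block d of g satisfies d * ω_{2t} * dᵀ = ω_{2t}. -/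
open Matrix

lemma omega_mul_transpose (t : ℕ) :
    (Matrix.fromBlocks 0 1 (-1) 0 : Matrix (Fin t ⊕ Fin t) (Fin t ⊕ Fin t) ℝ) *
      (Matrix.fromBlocks 0 1 (-1) 0 : Matrix (Fin t ⊕ Fin t) (Fin t ⊕ Fin t) ℝ)ᵀ = 1 := by
  rw [Matrix.fromBlocks_transpose, Matrix.fromBlocks_multiply]
  simp [Matrix.fromBlocks_one]

theorem stabilizer_of_degenerate_symplectic_form
    (k t : ℕ)
    (x : Matrix (Fin k ⊕ (Fin t ⊕ Fin t)) (Fin k ⊕ (Fin t ⊕ Fin t)) ℝ)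
    (hx : x = Matrix.fromBlocks 0 0 0 (Matrix.fromBlocks 0 1 (-1) 0))
    (g : Matrix (Fin k ⊕ (Fin t ⊕ Fin t)) (Fin k ⊕ (Fin t ⊕ Fin t)) ℝ)
    (hg : IsUnit g.det) :
    g * x * gᵀ = x ↔
      g.toBlocks₁₂ = 0 ∧
        g.toBlocks₂₂ * (Matrix.fromBlocks 0 1 (-1) 0) * (g.toBlocks₂₂)ᵀ =
          (Matrix.fromBlocks 0 1 (-1) 0 : Matrix (Fin t ⊕ Fin t) (Fin t ⊕ Fin t) ℝ) := by
  set ω : Matrix (Fin t ⊕ Fin t) (Fin t ⊕ Fin t) ℝ := Matrix.fromBlocks 0 1 (-1) 0 with hω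
  set b := g.toBlocks₁₂ with hb
  set d := g.toBlocks₂₂ with hd
  have hωdet : IsUnit ω.det := by
    have := congrArg Matrix.det (omega_mul_transpose t)
    rw [Matrix.det_mul, Matrix.det_transpose, Matrix.det_one] at this
    exact IsUnit.of_mul_eq_one _ this
  have hgx : g * x * gᵀ =
      Matrix.fromBlocks (b * ω * bᵀ) (b * ω * dᵀ) (d * ω * bᵀ) (d * ω * dᵀ) := by
    conv_lhs => rw [hx, ← Matrix.fromBlocks_toBlocks g]
    rw [Matrix.fromBlocks_transpose, Matrix.fromBlocks_multiply, Matrix.fromBlocks_multiply]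
    simp [hb, hd]
  constructor
  · intro h
    rw [hgx, hx] at h
    have h12 : b * ω * dᵀ = 0 := by
      have := congrArg Matrix.toBlocks₁₂ h
      simpa [Matrix.toBlocks_fromBlocks₁₂] using this
    have h22 : d * ω * dᵀ = ω := by
      have := congrArg Matrix.toBlocks₂₂ h
      simpa [Matrix.toBlocks_fromBlocks₂₂] using this
    refine ⟨?_, h22⟩
    have hddet : IsUnit d.det := by
      have hthis := congrArg Matrix.det h22
      rw [Matrix.det_mul, Matrix.det_mul, Matrix.det_transpose] at hthis
      have hne : ω.det ≠ 0 := hωdet.ne_zero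
      have h' : (d.det * d.det) * ω.det = 1 * ω.det := by rw [one_mul]; linarith [hthis]
      exact IsUnit.of_mul_eq_one _ (mul_right_cancel₀ hne h')
    have hωd : IsUnit (ω * dᵀ).det := by
      rw [Matrix.det_mul, Matrix.det_transpose]
      exact hωdet.mul hddet
    have key : b * (ω * dᵀ) * (ω * dᵀ)⁻¹ = b := by
      rw [Matrix.mul_assoc, Matrix.mul_nonsing_inv _ hωd, Matrix.mul_one]
    rw [← key, ← Matrix.mul_assoc, h12, Matrix.zero_mul]
  · rintro ⟨h12, h22⟩
    rw [hgx, h12, hx]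
    simp [h22]
end

section
/- Let n be a positive integer and let h be a real 2n × 2n matrix satisfying hᵀ * J * h = J, where J = fromBlocks 0 I_n (−I_n) 0 (i.e. h ∈ Sp_{2n}(ℝ)). Then for every real 2n × 2n matrix g, p(h * g) = p(g), where p(g) := det(Dᵀ * B − Bᵀ * D) and B, D are respectively the upper-right and lower-right n × n blocks of g. -/
open Matrix

/-- For a real `2n × 2n` matrix `g = (A B; C D)` (written in `n × n` blocks),
`pPoly g = det (Dᵀ * B - Bᵀ * D)`, where `B` is the upper-right block and `D` is the
lower-right block. -/
def pPoly {n : ℕ} (g : Matrix (Fin n ⊕ Fin n) (Fin n ⊕ Fin n) ℝ) : ℝ :=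
  ((g.toBlocks₂₂)ᵀ * g.toBlocks₁₂ - (g.toBlocks₁₂)ᵀ * g.toBlocks₂₂).det

private lemma key {n : ℕ} (g : Matrix (Fin n ⊕ Fin n) (Fin n ⊕ Fin n) ℝ) :
    (g.toBlocks₂₂)ᵀ * g.toBlocks₁₂ - (g.toBlocks₁₂)ᵀ * g.toBlocks₂₂ =
    - Matrix.toBlocks₂₂ ((g * Matrix.fromBlocks 0 0 0 1)ᵀ *
      (Matrix.fromBlocks 0 1 (-1) 0 : Matrix (Fin n ⊕ Fin n) (Fin n ⊕ Fin n) ℝ) *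
      (g * Matrix.fromBlocks 0 0 0 1)) := by
  conv_lhs => rw [← Matrix.fromBlocks_toBlocks g]
  conv_rhs => rw [← Matrix.fromBlocks_toBlocks g]
  simp only [Matrix.fromBlocks_multiply, Matrix.fromBlocks_transpose,
    Matrix.toBlocks_fromBlocks₂₂, Matrix.mul_zero, Matrix.zero_mul, Matrix.mul_one,
    Matrix.one_mul, add_zero, zero_add, Matrix.mul_neg, Matrix.neg_mul, neg_neg]
  noncomm_ring

theorem pPoly_left_symplectic_invariant (n : ℕ) (hn : 0 < n)
    (h : Matrix (Fin n ⊕ Fin n) (Fin n ⊕ Fin n) ℝ)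
    (hh : hᵀ * Matrix.fromBlocks 0 1 (-1) 0 * h =
      (Matrix.fromBlocks 0 1 (-1) 0 : Matrix (Fin n ⊕ Fin n) (Fin n ⊕ Fin n) ℝ))
    (g : Matrix (Fin n ⊕ Fin n) (Fin n ⊕ Fin n) ℝ) :
    pPoly (h * g) = pPoly g := by
  unfold pPoly
  rw [key (h * g), key g]
  congr 2
  have : (h * g * Matrix.fromBlocks 0 0 0 1)ᵀ *
      (Matrix.fromBlocks 0 1 (-1) 0 : Matrix (Fin n ⊕ Fin n) (Fin n ⊕ Fin n) ℝ) *
      (h * g * Matrix.fromBlocks 0 0 0 1) =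
      (g * Matrix.fromBlocks 0 0 0 1)ᵀ *
      (hᵀ * Matrix.fromBlocks 0 1 (-1) 0 * h) *
      (g * Matrix.fromBlocks 0 0 0 1) := by
    simp only [Matrix.transpose_mul]
    noncomm_ring
  rw [this, hh]
end

section
/- Let n be a positive integer. For every real 2n × 2n matrix g and all real n × n matrices a, b, d, one has p(g * fromBlocks a 0 b d) = (det d)² · p(g), where p(g) := det(Dᵀ * B − Bᵀ * D) and B, D are respectively the upper-right and lower-right n × n blocks of g. -/
open Matrix

theorem pPoly_right_parabolic_equivariant (n : ℕ) (hn : 0 < n)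
    (g : Matrix (Fin n ⊕ Fin n) (Fin n ⊕ Fin n) ℝ)
    (a b d : Matrix (Fin n) (Fin n) ℝ) :
    pPoly (g * Matrix.fromBlocks a 0 b d) = (d.det) ^ 2 * pPoly g := by
  have hg : g = Matrix.fromBlocks g.toBlocks₁₁ g.toBlocks₁₂ g.toBlocks₂₁ g.toBlocks₂₂ :=
    (Matrix.fromBlocks_toBlocks g).symm
  set A := g.toBlocks₁₁; set B := g.toBlocks₁₂; set C := g.toBlocks₂₁; set D := g.toBlocks₂₂
  rw [hg, Matrix.fromBlocks_multiply]
  simp only [pPoly, Matrix.toBlocks_fromBlocks₁₂, Matrix.toBlocks_fromBlocks₂₂,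
    Matrix.mul_zero, zero_add]
  have key : (D * d)ᵀ * (B * d) - (B * d)ᵀ * (D * d)
      = dᵀ * (Dᵀ * B - Bᵀ * D) * d := by
    simp only [Matrix.transpose_mul, Matrix.sub_mul, Matrix.mul_sub]
    noncomm_ring
  rw [key, Matrix.det_mul, Matrix.det_mul, Matrix.det_transpose]
  ring
end

section
/- Let n be a positive integer, let ω be the standard symplectic form on ℝ^{2n}, and let L ⊆ ℝ^{2n} be the span of the first n standard basis vectors. Then for every n-dimensional subspace W ⊆ ℝ^{2n}: finrank(W ⊓ W^⊥) + 2·finrank(L ⊓ W) ≤ n + 2·finrank(L ⊓ W ⊓ W^⊥). -/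
open Matrix

/-- The standard symplectic matrix `J = fromBlocks 0 I_n (-I_n) 0` on `ℝ^{2n}`,
with `ℝ^{2n}` realized as `Fin n ⊕ Fin n → ℝ`. -/
def Jmat (n : ℕ) : Matrix (Fin n ⊕ Fin n) (Fin n ⊕ Fin n) ℝ :=
  Matrix.fromBlocks 0 1 (-1) 0

/-- The standard symplectic form `ω(u,v) = uᵀ J v` on `ℝ^{2n}`. -/
def omegaForm (n : ℕ) (u v : Fin n ⊕ Fin n → ℝ) : ℝ :=
  u ⬝ᵥ (Jmat n) *ᵥ v

/-- The ω-orthogonal complement `W^⊥ = {v | ∀ w ∈ W, ω(v,w) = 0}` of a subspace `W`. -/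
def sympPerp (n : ℕ) (W : Submodule ℝ (Fin n ⊕ Fin n → ℝ)) :
    Submodule ℝ (Fin n ⊕ Fin n → ℝ) where
  carrier := {v | ∀ w ∈ W, omegaForm n v w = 0}
  zero_mem' := fun w _ => by simp [omegaForm]
  add_mem' := fun {a b} ha hb w hw => by
    have h1 := ha w hw
    have h2 := hb w hw
    simp only [omegaForm, add_dotProduct] at *
    rw [h1, h2, add_zero]
  smul_mem' := fun c a ha w hw => by
    have h1 := ha w hw
    simp only [omegaForm, smul_dotProduct, smul_eq_mul] at *
    rw [h1, mul_zero]

/-- `L`: the span of the first `n` standard basis vectors of `ℝ^{2n}`. -/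
def Lsub (n : ℕ) : Submodule ℝ (Fin n ⊕ Fin n → ℝ) :=
  Submodule.span ℝ (Set.range fun i : Fin n => Pi.single (Sum.inl i) (1 : ℝ))

open Module

noncomputable def Bform (n : ℕ) : LinearMap.BilinForm ℝ (Fin n ⊕ Fin n → ℝ) :=
  Matrix.toBilin' (Jmat n)

lemma Bform_apply (n : ℕ) (u v : Fin n ⊕ Fin n → ℝ) :
    Bform n u v = omegaForm n u v := Matrix.toBilin'_apply' _ _ _

lemma Jmat_transpose (n : ℕ) : (Jmat n)ᵀ = - Jmat n := by
  simp [Jmat, Matrix.fromBlocks_transpose, Matrix.fromBlocks_neg]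

lemma omega_skew (n : ℕ) (u v : Fin n ⊕ Fin n → ℝ) :
    omegaForm n u v = - omegaForm n v u := by
  unfold omegaForm
  rw [Matrix.dotProduct_mulVec, ← Matrix.mulVec_transpose, Jmat_transpose,
    Matrix.neg_mulVec, neg_dotProduct, dotProduct_comm]

lemma omega_single_inr (n : ℕ) (v : Fin n ⊕ Fin n → ℝ) (j : Fin n) :
    omegaForm n v (Pi.single (Sum.inr j) 1) = v (Sum.inl j) := by
  simp [omegaForm, Jmat, Matrix.mulVec_single, dotProduct, Fintype.sum_sum_type,
    Matrix.fromBlocks_apply₁₂, Matrix.fromBlocks_apply₂₂, Matrix.one_apply, Finset.sum_ite_eq']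

lemma omega_single_inl (n : ℕ) (v : Fin n ⊕ Fin n → ℝ) (j : Fin n) :
    omegaForm n v (Pi.single (Sum.inl j) 1) = - v (Sum.inr j) := by
  simp [omegaForm, Jmat, Matrix.mulVec_single, dotProduct, Fintype.sum_sum_type,
    Matrix.fromBlocks_apply₁₁, Matrix.fromBlocks_apply₂₁, Matrix.one_apply, Finset.sum_ite_eq']

lemma Bform_refl (n : ℕ) : (Bform n).IsRefl := by
  intro u v h
  rw [Bform_apply] at h ⊢
  rw [omega_skew, h, neg_zero]

lemma Bform_nondeg (n : ℕ) : (Bform n).Nondegenerate := by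
  refine LinearMap.BilinForm.Nondegenerate.ofSeparatingLeft ?_
  intro v hv
  funext i
  cases i with
  | inl j =>
    have := hv (Pi.single (Sum.inr j) 1)
    rw [Bform_apply, omega_single_inr] at this
    simpa using this
  | inr j =>
    have := hv (Pi.single (Sum.inl j) 1)
    rw [Bform_apply, omega_single_inl] at this
    simpa using this

lemma sympPerp_eq (n : ℕ) (S : Submodule ℝ (Fin n ⊕ Fin n → ℝ)) :
    sympPerp n S = (Bform n).orthogonal S := by
  ext v
  constructor
  · intro hv w hw
    have := hv w hw
    rw [Bform_apply, omega_skew, this, neg_zero]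
  · intro hv w hw
    have := hv w hw
    rw [Bform_apply] at this
    rw [omega_skew, this, neg_zero]

lemma finrank_total (n : ℕ) : finrank ℝ (Fin n ⊕ Fin n → ℝ) = 2 * n := by
  simp [Module.finrank_pi, two_mul]

lemma finrank_perp (n : ℕ) (S : Submodule ℝ (Fin n ⊕ Fin n → ℝ)) :
    finrank ℝ S + finrank ℝ (sympPerp n S) = 2 * n := by
  rw [sympPerp_eq]
  have h := LinearMap.BilinForm.finrank_add_finrank_orthogonal (Bform_refl n) S
  rwa [LinearMap.BilinForm.orthogonal_top_eq_bot (Bform_nondeg n), inf_bot_eq, finrank_bot,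
    add_zero, finrank_total] at h

lemma finrank_Lsub (n : ℕ) : finrank ℝ (Lsub n) = n := by
  have hli : LinearIndependent ℝ
      (fun i : Fin n => Pi.single (M := fun _ : Fin n ⊕ Fin n => ℝ) (Sum.inl i) (1 : ℝ)) := by
    have := (Pi.basisFun ℝ (Fin n ⊕ Fin n)).linearIndependent
    have h2 := this.comp Sum.inl Sum.inl_injective
    convert h2 using 1
    funext i
    simp [Function.comp, Pi.basisFun_apply]
  have := finrank_span_eq_card hli
  simp only [Fintype.card_fin] at this
  exact this

/-- inr-components of elements of Lsub vanish -/
lemma Lsub_inr (n : ℕ) (v : Fin n ⊕ Fin n → ℝ) (hv : v ∈ Lsub n) (j : Fin n) :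
    v (Sum.inr j) = 0 := by
  have : Lsub n ≤
      LinearMap.ker (LinearMap.proj (R := ℝ) (φ := fun _ : Fin n ⊕ Fin n => ℝ) (Sum.inr j)) := by
    rw [Lsub, Submodule.span_le]
    rintro x ⟨i, rfl⟩
    simp [LinearMap.mem_ker, Pi.single_apply]
  exact this hv

lemma Lsub_isotropic (n : ℕ) (x y : Fin n ⊕ Fin n → ℝ) (hx : x ∈ Lsub n) (hy : y ∈ Lsub n) :
    omegaForm n x y = 0 := by
  have hJ : ∀ i : Fin n, ((Jmat n) *ᵥ y) (Sum.inl i) = 0 := by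
    intro i
    simp [Jmat, Matrix.mulVec, dotProduct, Fintype.sum_sum_type, Lsub_inr n y hy]
  rw [omegaForm, dotProduct, Fintype.sum_sum_type]
  have h1 : ∀ i : Fin n, x (Sum.inl i) * ((Jmat n) *ᵥ y) (Sum.inl i) = 0 := fun i => by
    rw [hJ i, mul_zero]
  have h2 : ∀ i : Fin n, x (Sum.inr i) * ((Jmat n) *ᵥ y) (Sum.inr i) = 0 := fun i => by
    rw [Lsub_inr n x hx i, zero_mul]
  simp [h1, h2]

lemma omega_add_right (n : ℕ) (x a b : Fin n ⊕ Fin n → ℝ) :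
    omegaForm n x (a + b) = omegaForm n x a + omegaForm n x b := by
  simp [omegaForm, Matrix.mulVec_add, dotProduct_add]

lemma mem_sympPerp (n : ℕ) {S : Submodule ℝ (Fin n ⊕ Fin n → ℝ)}
    {v : Fin n ⊕ Fin n → ℝ} (hv : v ∈ sympPerp n S) {w : Fin n ⊕ Fin n → ℝ} (hw : w ∈ S) :
    omegaForm n v w = 0 := hv w hw

theorem invariant_inequality (n : ℕ) (hn : 0 < n)
    (W : Submodule ℝ (Fin n ⊕ Fin n → ℝ)) (hW : Module.finrank ℝ W = n) :
    Module.finrank ℝ ↥(W ⊓ sympPerp n W) + 2 * Module.finrank ℝ ↥(Lsub n ⊓ W) ≤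
      n + 2 * Module.finrank ℝ ↥(Lsub n ⊓ W ⊓ sympPerp n W) := by
  classical
  set U : Submodule ℝ (Fin n ⊕ Fin n → ℝ) := Lsub n ⊓ W with hU
  set R : Submodule ℝ (Fin n ⊕ Fin n → ℝ) := W ⊓ sympPerp n W with hR
  set V : Submodule ℝ (Fin n ⊕ Fin n → ℝ) := U ⊔ R with hV
  -- perp of W has dimension n
  have hWperp : finrank ℝ (sympPerp n W) = n := by
    have := finrank_perp n W
    omega
  -- U ⊓ R = A
  have hUW : U ⊓ W = U := inf_eq_left.mpr (hU ▸ inf_le_right)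
  have hUR : U ⊓ R = U ⊓ sympPerp n W := by
    rw [hR, ← inf_assoc, hUW]
  -- dimension of V
  have e1 : finrank ℝ ↥V + finrank ℝ ↥(U ⊓ sympPerp n W) =
      finrank ℝ ↥U + finrank ℝ ↥R := by
    rw [hV, ← hUR]
    exact Submodule.finrank_sup_add_finrank_inf_eq U R
  -- V ≤ W
  have hVW : V ≤ W := sup_le inf_le_right inf_le_left
  -- V is isotropic
  have hViso : V ≤ sympPerp n V := by
    intro x hx
    intro y hy
    rcases Submodule.mem_sup.mp hx with ⟨a, ha, b, hb, rfl⟩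
    rcases Submodule.mem_sup.mp hy with ⟨c, hc, d, hd, rfl⟩
    have hbW : b ∈ sympPerp n W := hb.2
    have hdW : d ∈ sympPerp n W := hd.2
    have hab1 : omegaForm n a c = 0 := Lsub_isotropic n a c ha.1 hc.1
    have hab2 : omegaForm n a d = 0 := by
      rw [omega_skew, mem_sympPerp n hdW (ha.2 : a ∈ W), neg_zero]
    have hab3 : omegaForm n b c = 0 := mem_sympPerp n hbW hc.2
    have hab4 : omegaForm n b d = 0 := mem_sympPerp n hbW hd.1
    have : omegaForm n (a + b) (c + d) =
        omegaForm n a c + omegaForm n a d + (omegaForm n b c + omegaForm n b d) := by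
      simp only [omegaForm, add_dotProduct, Matrix.mulVec_add, dotProduct_add]
      ring
    rw [this, hab1, hab2, hab3, hab4]
    ring
  -- key inclusion
  have hkey : W ⊓ sympPerp n V ≤ sympPerp n (sympPerp n W ⊔ V) := by
    rintro x ⟨hxW, hxV⟩ z hz
    rcases Submodule.mem_sup.mp hz with ⟨z1, hz1, z2, hz2, rfl⟩
    have h1 : omegaForm n x z1 = 0 := by
      rw [omega_skew, mem_sympPerp n hz1 hxW, neg_zero]
    have h2 : omegaForm n x z2 = 0 := mem_sympPerp n hxV hz2
    rw [omega_add_right, h1, h2, add_zero]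
  -- dimension chains
  have e2 : finrank ℝ V ≤ finrank ℝ (W ⊓ sympPerp n V : Submodule ℝ _) :=
    Submodule.finrank_mono (le_inf hVW hViso)
  have e3 : finrank ℝ (W ⊓ sympPerp n V : Submodule ℝ _) ≤
      finrank ℝ (sympPerp n (sympPerp n W ⊔ V)) := Submodule.finrank_mono hkey
  have e4 : finrank ℝ (sympPerp n W ⊔ V : Submodule ℝ _) +
      finrank ℝ (sympPerp n (sympPerp n W ⊔ V)) = 2 * n := finrank_perp n _
  have hinf : sympPerp n W ⊓ V = R := by
    apply le_antisymm
    · exact le_inf (le_trans inf_le_right hVW) inf_le_left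
    · exact le_inf inf_le_right le_sup_right
  have e5 : finrank ℝ (sympPerp n W ⊔ V : Submodule ℝ _) + finrank ℝ R =
      n + finrank ℝ V := by
    have := Submodule.finrank_sup_add_finrank_inf_eq (sympPerp n W) V
    rw [hinf, hWperp] at this
    omega
  omega
end

section
/- Let r be a positive integer and suppose P : Matrix (Fin r) (Fin r) ℝ → ℝ is a polynomial function such that P(1) = 1 and P(g * h) = P(g) · P(h) for all invertible g, h ∈ Matrix (Fin r) (Fin r) ℝ. Then there exists a natural number k such that P(A) = (det A)^k for every A ∈ Matrix (Fin r) (Fin r) ℝ. -/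
open Matrix

open Polynomial

lemma aux_eval_aeval {σ : Type*} (q : MvPolynomial σ ℝ) (f : σ → Polynomial ℝ) (t : ℝ) :
    (MvPolynomial.aeval f q).eval t = MvPolynomial.eval (fun i => (f i).eval t) q := by
  induction q using MvPolynomial.induction_on with
  | C a => simp
  | add p q hp hq => simp [hp, hq]
  | mul_X p n hp => simp [hp]

lemma aux_add_char (g : Polynomial ℝ) (h0 : g.eval 0 = 1)
    (hm : ∀ c d : ℝ, g.eval (c + d) = g.eval c * g.eval d) : ∀ c : ℝ, g.eval c = 1 := by
  have hg0 : g ≠ 0 := fun h => by simp [h] at h0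
  have hcomp : g.comp (C 2 * X) = g * g := by
    apply Polynomial.funext
    intro x
    rw [eval_comp]
    simp only [eval_mul, eval_C, eval_X]
    rw [show (2 : ℝ) * x = x + x by ring, hm]
  have hdeg : g.natDegree = 0 := by
    have h1 : (g.comp (C 2 * X)).natDegree = g.natDegree := by
      rw [natDegree_comp, natDegree_C_mul_X _ (two_ne_zero), mul_one]
    have h2 : (g * g).natDegree = 2 * g.natDegree := by
      rw [natDegree_mul hg0 hg0]; ring
    rw [hcomp, h2] at h1
    omega
  obtain ⟨a, ha⟩ := Polynomial.natDegree_eq_zero.mp hdeg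
  intro c
  rw [← ha, eval_C]
  rw [← ha, eval_C] at h0
  exact h0

lemma aux_mul_char (f : Polynomial ℝ) (h1 : f.eval 1 = 1)
    (hm : ∀ x y : ℝ, x ≠ 0 → y ≠ 0 → f.eval (x * y) = f.eval x * f.eval y) :
    ∃ k : ℕ, ∀ x : ℝ, f.eval x = x ^ k := by
  have hf0 : f ≠ 0 := fun h => by simp [h] at h1
  have hinf : ({x : ℝ | x ≠ 0}).Infinite := by
    have h := (Set.finite_singleton (0 : ℝ)).infinite_compl
    convert h using 1
    ext x; simp
  have key : ∀ y : ℝ, y ≠ 0 → f.comp (C y * X) = C (f.eval y) * f := by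
    intro y hy
    have : f.comp (C y * X) - C (f.eval y) * f = 0 := by
      apply Polynomial.eq_zero_of_infinite_isRoot
      apply Set.Infinite.mono _ hinf
      intro x hx
      simp only [Set.mem_setOf_eq, IsRoot, eval_sub, eval_comp, eval_mul, eval_C, eval_X]
      rw [mul_comm y x, hm x y hx hy]
      ring
    exact sub_eq_zero.mp this
  refine ⟨f.natDegree, ?_⟩
  have hval : ∀ y : ℝ, y ≠ 0 → f.eval y = y ^ f.natDegree := by
    intro y hy
    have hlc := congrArg Polynomial.leadingCoeff (key y hy)
    have hq : (C y * X : ℝ[X]).natDegree ≠ 0 := by rw [natDegree_C_mul_X _ hy]; norm_num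
    rw [Polynomial.leadingCoeff_comp hq] at hlc
    simp only [Polynomial.leadingCoeff_mul, Polynomial.leadingCoeff_C,
      Polynomial.leadingCoeff_X, mul_one] at hlc
    have hlc0 : f.leadingCoeff ≠ 0 := Polynomial.leadingCoeff_ne_zero.mpr hf0
    rw [mul_comm f.leadingCoeff] at hlc
    exact (mul_right_cancel₀ hlc0 hlc).symm
  have : f - X ^ f.natDegree = 0 := by
    apply Polynomial.eq_zero_of_infinite_isRoot
    apply Set.Infinite.mono _ hinf
    intro x hx
    simp only [Set.mem_setOf_eq, IsRoot, eval_sub, eval_pow, eval_X]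
    rw [hval x hx]; ring
  have hfx : f = X ^ f.natDegree := sub_eq_zero.mp this
  intro x
  rw [hfx]; simp

theorem algebraic_character_is_power_of_det
    (r : ℕ) (hr : 0 < r)
    (P : Matrix (Fin r) (Fin r) ℝ → ℝ) (hP : IsPolynomialFun P)
    (hone : P 1 = 1)
    (hmul : ∀ g h : Matrix (Fin r) (Fin r) ℝ, IsUnit g.det → IsUnit h.det →
      P (g * h) = P g * P h) :
    ∃ k : ℕ, ∀ A : Matrix (Fin r) (Fin r) ℝ, P A = A.det ^ k := by
  obtain ⟨q, hq⟩ := hP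
  -- Step 1: P is 1 on transvections
  have htrans : ∀ (i j : Fin r), i ≠ j → ∀ c : ℝ, P (transvection i j c) = 1 := by
    intro i j hij c
    set g : Polynomial ℝ := MvPolynomial.aeval
      (fun pr : Fin r × Fin r =>
        C ((1 : Matrix (Fin r) (Fin r) ℝ) pr.1 pr.2) +
          if i = pr.1 ∧ j = pr.2 then X else 0) q with hgdef
    have hg : ∀ t : ℝ, g.eval t = P (transvection i j t) := by
      intro t
      rw [hq, hgdef, aux_eval_aeval]
      have : (fun pr : Fin r × Fin r =>
          eval t (C ((1 : Matrix (Fin r) (Fin r) ℝ) pr.1 pr.2) +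
            if i = pr.1 ∧ j = pr.2 then X else 0)) =
          fun pr : Fin r × Fin r => transvection i j t pr.1 pr.2 := by
        funext pr
        by_cases h : i = pr.1 ∧ j = pr.2 <;>
          simp [Matrix.transvection, Matrix.add_apply, Matrix.single,
            Matrix.of_apply, h]
      rw [this]
    have hu : ∀ t : ℝ, IsUnit (transvection i j t).det := by
      intro t; rw [Matrix.det_transvection_of_ne _ _ hij]; exact isUnit_one
    have hadd : ∀ c d : ℝ, g.eval (c + d) = g.eval c * g.eval d := by
      intro c d
      rw [hg, hg, hg, ← Matrix.transvection_mul_transvection_same i j hij c d,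
        hmul _ _ (hu c) (hu d)]
    have h0 : g.eval 0 = 1 := by rw [hg, Matrix.transvection_zero, hone]
    rw [← hg]
    exact aux_add_char g h0 hadd c
  -- Step 2: P is 1 on products of transvections
  have hlist : ∀ L : List (TransvectionStruct (Fin r) ℝ),
      P ((L.map TransvectionStruct.toMatrix).prod) = 1 := by
    intro L
    induction L with
    | nil => simpa using hone
    | cons t L ih =>
      rw [List.map_cons, List.prod_cons,
        hmul _ _ (by simp) (by simp [Matrix.TransvectionStruct.det_toMatrix_prod] : IsUnit _), ih,
        mul_one]
      exact htrans t.i t.j t.hij t.c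
  -- Step 3: single diagonal characters
  have hdiag1 : ∀ i : Fin r, ∃ k : ℕ, ∀ t : ℝ,
      P (diagonal (Function.update (1 : Fin r → ℝ) i t)) = t ^ k := by
    intro i
    set f : Polynomial ℝ := MvPolynomial.aeval
      (fun pr : Fin r × Fin r =>
        if pr.1 = pr.2 then (if pr.1 = i then X else 1) else 0) q with hfdef
    have hf : ∀ t : ℝ, f.eval t = P (diagonal (Function.update (1 : Fin r → ℝ) i t)) := by
      intro t
      rw [hq, hfdef, aux_eval_aeval]
      have : (fun pr : Fin r × Fin r =>
          eval t (if pr.1 = pr.2 then (if pr.1 = i then X else (1 : ℝ[X])) else 0)) =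
          fun pr : Fin r × Fin r => diagonal (Function.update (1 : Fin r → ℝ) i t) pr.1 pr.2 := by
        funext pr
        simp only [Matrix.diagonal_apply, Function.update_apply]
        split_ifs <;> simp_all
      rw [this]
    have hdet : ∀ t : ℝ, (diagonal (Function.update (1 : Fin r → ℝ) i t)).det = t := by
      intro t
      rw [Matrix.det_diagonal, Finset.prod_update_of_mem (Finset.mem_univ i)]
      simp
    have hmult : ∀ x y : ℝ, x ≠ 0 → y ≠ 0 → f.eval (x * y) = f.eval x * f.eval y := by
      intro x y hx hy
      have hupd : (fun a => Function.update (1 : Fin r → ℝ) i x a *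
            Function.update (1 : Fin r → ℝ) i y a)
          = Function.update (1 : Fin r → ℝ) i (x * y) := by
        funext a
        by_cases h : a = i <;> simp [Function.update_apply, h]
      have hux : IsUnit (diagonal (Function.update (1 : Fin r → ℝ) i x)).det := by
        rw [hdet]; exact isUnit_iff_ne_zero.mpr hx
      have huy : IsUnit (diagonal (Function.update (1 : Fin r → ℝ) i y)).det := by
        rw [hdet]; exact isUnit_iff_ne_zero.mpr hy
      rw [hf, hf, hf, ← hmul _ _ hux huy, Matrix.diagonal_mul_diagonal]
      exact (congrArg (fun v => P (diagonal v)) hupd).symm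
    have h1 : f.eval 1 = 1 := by
      have hupd1 : Function.update (1 : Fin r → ℝ) i 1 = 1 := by
        funext a
        simp [Function.update_apply]
      have hδ : Matrix.diagonal (1 : Fin r → ℝ) = (1 : Matrix (Fin r) (Fin r) ℝ) :=
        Matrix.diagonal_one
      rw [hf, hupd1, hδ, hone]
    obtain ⟨k, hk⟩ := aux_mul_char f h1 hmult
    exact ⟨k, fun t => by rw [← hf]; exact hk t⟩
  choose kk hkk using hdiag1
  -- Step 4: all exponents equal
  have hkeq : ∀ i j : Fin r, kk i = kk j := by
    intro i j
    rcases eq_or_ne i j with rfl | hij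
    · rfl
    · have h2 : (2 : ℝ) ^ kk i = 2 ^ kk j := by
        set σ := Equiv.swap i j with hσdef
        set S : Matrix (Fin r) (Fin r) ℝ := σ.toPEquiv.toMatrix with hSdef
        have hSu : IsUnit S.det := by
          have hdet : S.det = ((Equiv.Perm.sign σ : ℤ) : ℝ) := Matrix.det_permutation σ
          rcases Int.units_eq_one_or (Equiv.Perm.sign σ) with h | h <;>
            rw [hdet, h] <;> norm_num
        have hSS : S * S = 1 := by
          rw [hSdef, ← PEquiv.toMatrix_trans, ← Equiv.toPEquiv_trans]
          simp [hσdef, Equiv.swap_swap, Equiv.toPEquiv_refl]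
        have hconj : S * diagonal (Function.update (1 : Fin r → ℝ) i 2) * S
            = diagonal (Function.update (1 : Fin r → ℝ) j 2) := by
          rw [hSdef, PEquiv.toMatrix_toPEquiv_mul, PEquiv.mul_toMatrix_toPEquiv,
            Matrix.submatrix_submatrix]
          have hsymm : σ.symm = σ := by simp [hσdef]
          rw [hsymm]
          rw [show ((diagonal (Function.update (1 : Fin r → ℝ) i 2)).submatrix (σ ∘ id) (id ∘ σ) : Matrix (Fin r) (Fin r) ℝ) = (diagonal (Function.update (1 : Fin r → ℝ) i 2)).submatrix σ σ from rfl,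
            Matrix.submatrix_diagonal_equiv]
          have hfn : (Function.update (1 : Fin r → ℝ) i 2) ∘ σ
              = Function.update (1 : Fin r → ℝ) j 2 := by
            funext a
            simp only [Function.comp_apply, Function.update_apply, Pi.one_apply, hσdef]
            rcases eq_or_ne a j with rfl | haj
            · simp [Equiv.swap_apply_right, hij, Ne.symm hij]
            · rcases eq_or_ne a i with rfl | hai
              · simp [Equiv.swap_apply_left, hij, Ne.symm hij, haj]
              · simp [Equiv.swap_apply_of_ne_of_ne hai haj, hai, haj]
          rw [hfn]
        have hDu : IsUnit (diagonal (Function.update (1 : Fin r → ℝ) i 2)).det := by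
          rw [Matrix.det_diagonal, Finset.prod_update_of_mem (Finset.mem_univ i)]
          simp
        calc (2 : ℝ) ^ kk i = P (diagonal (Function.update (1 : Fin r → ℝ) i 2)) :=
              (hkk i 2).symm
          _ = P (S * S) * P (diagonal (Function.update (1 : Fin r → ℝ) i 2)) := by
              rw [hSS, hone, one_mul]
          _ = P S * P S * P (diagonal (Function.update (1 : Fin r → ℝ) i 2)) := by
              rw [hmul S S hSu hSu]
          _ = P S * (P (diagonal (Function.update (1 : Fin r → ℝ) i 2)) * P S) := by ring
          _ = P S * P (diagonal (Function.update (1 : Fin r → ℝ) i 2) * S) := by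
              rw [hmul _ _ hDu hSu]
          _ = P (S * (diagonal (Function.update (1 : Fin r → ℝ) i 2) * S)) := by
              rw [hmul _ _ hSu]
              rw [Matrix.det_mul]
              exact (hDu.mul hSu)
          _ = P (diagonal (Function.update (1 : Fin r → ℝ) j 2)) := by
              rw [← Matrix.mul_assoc, hconj]
          _ = 2 ^ kk j := hkk j 2
      exact Nat.pow_right_injective (le_refl 2) (by exact_mod_cast h2)
  set K := kk ⟨0, hr⟩ with hKdef
  -- Step 5: P on diagonal matrices with nonzero entries
  have hdiagP : ∀ (s : Finset (Fin r)) (D : Fin r → ℝ), (∀ a, D a ≠ 0) →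
      (∀ a ∉ s, D a = 1) → P (diagonal D) = ∏ a ∈ s, D a ^ K := by
    intro s
    induction s using Finset.induction_on with
    | empty =>
      intro D _ hD1
      have : D = 1 := funext fun a => hD1 a (Finset.notMem_empty a)
      have hδ : Matrix.diagonal (1 : Fin r → ℝ) = (1 : Matrix (Fin r) (Fin r) ℝ) :=
        Matrix.diagonal_one
      rw [this, hδ, hone, Finset.prod_empty]
    | insert a s ha ih =>
      intro D hD0 hD1
      have hsplit : Function.update D a 1 * Function.update (1 : Fin r → ℝ) a (D a) = D := by
        funext x
        rcases eq_or_ne x a with rfl | hx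
        · simp [Function.update_apply]
        · simp [Function.update_apply, hx]
      have hu1 : IsUnit (diagonal (Function.update D a 1)).det := by
        rw [Matrix.det_diagonal]
        refine isUnit_iff_ne_zero.mpr (Finset.prod_ne_zero_iff.mpr fun x _ => ?_)
        rcases eq_or_ne x a with rfl | hx
        · simp [Function.update_apply]
        · simp [Function.update_apply, hx, hD0 x]
      have hu2 : IsUnit (diagonal (Function.update (1 : Fin r → ℝ) a (D a))).det := by
        rw [Matrix.det_diagonal, Finset.prod_update_of_mem (Finset.mem_univ a)]
        simpa using hD0 a
      have hsplit' : (fun x => Function.update D a 1 x *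
          Function.update (1 : Fin r → ℝ) a (D a) x) = D := by
        funext x
        exact congrFun hsplit x
      have key : P (diagonal D) = P (diagonal (Function.update D a 1)) *
          P (diagonal (Function.update (1 : Fin r → ℝ) a (D a))) := by
        rw [← hmul _ _ hu1 hu2, Matrix.diagonal_mul_diagonal]
        exact (congrArg (fun v => P (diagonal v)) hsplit').symm
      rw [key, hkk a (D a), hkeq a ⟨0, hr⟩,
        ih (Function.update D a 1)
          (fun x => by
            rcases eq_or_ne x a with rfl | hx
            · simp [Function.update_apply]
            · simp [Function.update_apply, hx, hD0 x])
          (fun x hx => by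
            rcases eq_or_ne x a with rfl | hxa
            · simp
            · rw [Function.update_apply, if_neg hxa]
              exact hD1 x (by simp [hxa, hx])),
        Finset.prod_insert ha]
      have : ∏ x ∈ s, Function.update D a 1 x ^ K = ∏ x ∈ s, D x ^ K :=
        Finset.prod_congr rfl fun x hx => by
          rw [Function.update_apply, if_neg (fun h => ha (by rw [← h]; exact hx))]
      rw [this]
      ring
  -- Step 6: invertible case
  have hinv : ∀ M : Matrix (Fin r) (Fin r) ℝ, IsUnit M.det → P M = M.det ^ K := by
    intro M hM
    obtain ⟨L, L', D, hdecomp⟩ :=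
      Matrix.Pivot.exists_list_transvec_mul_diagonal_mul_list_transvec M
    have hdetD : M.det = (diagonal D).det := by
      rw [hdecomp]
      simp [Matrix.det_mul]
    have hD0 : ∀ a, D a ≠ 0 := by
      intro a
      have := isUnit_iff_ne_zero.mp hM
      rw [hdetD, Matrix.det_diagonal] at this
      exact fun h => this (Finset.prod_eq_zero (Finset.mem_univ a) h)
    have hDu : IsUnit (diagonal D).det := by rw [← hdetD]; exact hM
    have hLu : IsUnit ((L.map TransvectionStruct.toMatrix).prod).det := by simp
    have hLu' : IsUnit ((L'.map TransvectionStruct.toMatrix).prod).det := by simp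
    have hmix : IsUnit (diagonal D * (L'.map TransvectionStruct.toMatrix).prod).det := by
      rw [Matrix.det_mul]; exact hDu.mul hLu'
    rw [hdetD, Matrix.det_diagonal, ← Finset.prod_pow, hdecomp, Matrix.mul_assoc,
      hmul _ _ hLu hmix, hmul _ _ hDu hLu', hlist L, hlist L', one_mul, mul_one,
      hdiagP Finset.univ D hD0 (fun a ha => absurd (Finset.mem_univ a) ha)]
  -- Step 7: general case via the characteristic polynomial
  refine ⟨K, fun A => ?_⟩
  set d : Polynomial ℝ := (-A).charpoly with hddef
  have hdeval : ∀ t : ℝ, d.eval t = (A + t • (1 : Matrix (Fin r) (Fin r) ℝ)).det := by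
    intro t
    rw [hddef, Matrix.charpoly]
    rw [show eval t (Matrix.charmatrix (-A)).det
        = ((Matrix.charmatrix (-A)).map (eval t : ℝ[X] → ℝ)).det from
      (RingHom.map_det (evalRingHom t) (Matrix.charmatrix (-A)))]
    congr 1
    ext a b
    rcases eq_or_ne a b with rfl | hab
    · simp [Matrix.charmatrix_apply_eq, Matrix.add_apply, Matrix.smul_apply, Matrix.one_apply]
      ring
    · simp [Matrix.charmatrix_apply_ne _ _ _ hab, Matrix.add_apply, Matrix.smul_apply,
        Matrix.one_apply_ne hab]
  have hdmonic : d.Monic := Matrix.charpoly_monic (-A)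
  have hd0 : d ≠ 0 := hdmonic.ne_zero
  -- the polynomial giving t ↦ P (A + t • 1)
  set p : Polynomial ℝ := MvPolynomial.aeval
    (fun pr : Fin r × Fin r =>
      C (A pr.1 pr.2) + if pr.1 = pr.2 then (X : ℝ[X]) else 0) q with hpdef
  have hp : ∀ t : ℝ, p.eval t = P (A + t • (1 : Matrix (Fin r) (Fin r) ℝ)) := by
    intro t
    rw [hq, hpdef, aux_eval_aeval]
    have : (fun pr : Fin r × Fin r =>
        eval t (C (A pr.1 pr.2) + if pr.1 = pr.2 then (X : ℝ[X]) else 0)) =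
        fun pr : Fin r × Fin r =>
          (A + t • (1 : Matrix (Fin r) (Fin r) ℝ)) pr.1 pr.2 := by
      funext pr
      rcases eq_or_ne pr.1 pr.2 with h | h <;>
        simp [Matrix.add_apply, Matrix.smul_apply, Matrix.one_apply, h]
    rw [this]
  have hroots : ({t : ℝ | d.eval t ≠ 0}).Infinite := by
    have h := (Polynomial.finite_setOf_isRoot hd0).infinite_compl
    convert h using 1
    ext t; simp
  have hpeq : p = d ^ K := by
    have : p - d ^ K = 0 := by
      apply Polynomial.eq_zero_of_infinite_isRoot
      apply Set.Infinite.mono _ hroots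
      intro t ht
      simp only [Set.mem_setOf_eq, IsRoot, eval_sub, eval_pow]
      have hu : IsUnit (A + t • (1 : Matrix (Fin r) (Fin r) ℝ)).det := by
        rw [← hdeval t]
        exact isUnit_iff_ne_zero.mpr ht
      rw [hp t, hinv _ hu, ← hdeval t]
      ring
    exact sub_eq_zero.mp this
  have h0 := hp 0
  rw [hpeq] at h0
  simp only [eval_pow] at h0
  rw [hdeval 0] at h0
  simpa using h0.symm
end
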